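/- Let η̃ ∈ [0,1], ḡ > 0, and c > 0 with c < b̃₀(η̃), where b̃₀(η̃) = 1/(1-η̃) for η̃ ∈ [0,1/3] and 1/(2η̃) for η̃ ∈ (1/3,1]. If additionally 1 - 2(1-η̃)c² ≠ 0, φ > 0 and s̃ ∈ [-c/ḡ, 0) satisfy both [1-2(1-η̃)c²]φ² - 2(2-η̃)ḡs̃φ - 2 = 0 and 2c²[1-(1-η̃)²c²]φ² + [2+η̃-2(2-η̃)(1-η̃)c²]ḡs̃φ + 1 - 2(1-η̃)c² = 0, then φ = -(1+4η̃c²)/(ḡs̃(2+η̃+4η̃c²)). -/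

import Mathlib

/-- The strong-convexity bound b̃₀ of the slippery-cross-slope metric. -/
noncomputable def btilde0 (η : ℝ) : ℝ := if η ≤ 1/3 then 1/(1-η) else 1/(2*η)

theorem linear_eq_of_SI_SII (η g c φ s : ℝ)
    (hSI : (1 - 2*(1-η)*c^2)*φ^2 - 2*(2-η)*g*s*φ - 2 = 0)
    (hSII : 2*c^2*(1-(1-η)^2*c^2)*φ^2 + (2+η-2*(2-η)*(1-η)*c^2)*g*s*φ
        + 1 - 2*(1-η)*c^2 = 0) :
    (2 + η + 4*η*c^2) * (g*s*φ) + (1 + 4*η*c^2) = 0 := by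
  linear_combination (1 - 2*(1-η)*c^2) * hSII - 2*c^2*(1-(1-η)^2*c^2) * hSI

theorem stmt_19_general (η g c φ s : ℝ) (hη : η ∈ Set.Icc (0:ℝ) 1) (hg : 0 < g)
    (hs : s ∈ Set.Ico (-(c/g)) 0)
    (hSI : (1 - 2*(1-η)*c^2)*φ^2 - 2*(2-η)*g*s*φ - 2 = 0)
    (hSII : 2*c^2*(1-(1-η)^2*c^2)*φ^2 + (2+η-2*(2-η)*(1-η)*c^2)*g*s*φ
        + 1 - 2*(1-η)*c^2 = 0) :
    φ = -(1 + 4*η*c^2) / (g*s*(2 + η + 4*η*c^2)) := by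
  have hgs : g * s < 0 := mul_neg_of_pos_of_neg hg hs.2
  have hA : 0 < 2 + η + 4*η*c^2 := by linarith [hη.1, mul_nonneg hη.1 (sq_nonneg c)]
  rw [eq_div_iff (mul_neg_of_neg_of_pos hgs hA).ne]
  linear_combination linear_eq_of_SI_SII η g c φ s hSI hSII

/-- solving (SI) and (SII) simultaneously forces the closed-form
value φ = -(1+4η̃c²)/(ḡs̃(2+η̃+4η̃c²)). -/
theorem stmt_19 (η g c φ s : ℝ) (hη : η ∈ Set.Icc (0:ℝ) 1) (hg : 0 < g)
    (hc : 0 < c) (hcb : c < btilde0 η)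
    (hlead : 1 - 2*(1-η)*c^2 ≠ 0) (hφ : 0 < φ) (hs : s ∈ Set.Ico (-(c/g)) 0)
    (hSI : (1 - 2*(1-η)*c^2)*φ^2 - 2*(2-η)*g*s*φ - 2 = 0)
    (hSII : 2*c^2*(1-(1-η)^2*c^2)*φ^2 + (2+η-2*(2-η)*(1-η)*c^2)*g*s*φ
        + 1 - 2*(1-η)*c^2 = 0) :
    φ = -(1 + 4*η*c^2) / (g*s*(2 + η + 4*η*c^2)) :=
  stmt_19_general η g c φ s hη hg hs hSI hSII
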